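/- arXiv:1304.6382 — 7 statements merged into one kernel-verified Lean document; each statement's English description precedes it below -/
import Mathlib

section
/- Let k be a field and let V be a module over the formal power series ring k[[ℏ]] which is ℏ-adically complete. Let Π₁, Π₂ : V → V be k[[ℏ]]-linear endomorphisms satisfying Π₁∘Π₁ = Π₁, Π₂∘Π₂ = Π₂, and (Π₁ − Π₂)(v) ∈ ℏV for every v ∈ V. Then the restriction of Π₂ to the range of Π₁ is a k[[ℏ]]-linear bijection from the range of Π₁ onto the range of Π₂. -/
open PowerSeries

private lemma mem_span_pow_smul_iff {k : Type*} [Field k] {V : Type*} [AddCommGroup V]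
    [Module (PowerSeries k) V] (n : ℕ) (v : V) :
    v ∈ ((Ideal.span {(X : PowerSeries k)}) ^ n • ⊤ : Submodule (PowerSeries k) V) ↔
      ∃ w : V, v = (X : PowerSeries k) ^ n • w := by
  rw [Ideal.span_singleton_pow]
  constructor
  · intro h
    refine Submodule.smul_induction_on h ?_ ?_
    · intro r hr m _
      obtain ⟨c, rfl⟩ := Ideal.mem_span_singleton.mp hr
      exact ⟨c • m, by rw [mul_smul]⟩
    · rintro x y ⟨wx, rfl⟩ ⟨wy, rfl⟩
      exact ⟨wx + wy, by rw [smul_add]⟩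
  · rintro ⟨w, rfl⟩
    exact Submodule.smul_mem_smul (Ideal.mem_span_singleton_self _) trivial

/-- Let `V` be an `ℏ`-adically complete module over `k[[ℏ]]` and let
`P₁ P₂ : V → V` be `k[[ℏ]]`-linear idempotents with `P₁ v - P₂ v ∈ ℏV` for all `v`.
Then `P₂` restricts to a bijection from the range of `P₁` onto the range of `P₂`. -/
theorem nearby_projections_have_isomorphic_images (k : Type*) [Field k]
    (V : Type*) [AddCommGroup V] [Module (PowerSeries k) V]
    [IsAdicComplete (Ideal.span {(PowerSeries.X : PowerSeries k)}) V]
    (P₁ P₂ : V →ₗ[PowerSeries k] V)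
    (h₁ : P₁ ∘ₗ P₁ = P₁) (h₂ : P₂ ∘ₗ P₂ = P₂)
    (hclose : ∀ v : V, ∃ w : V, P₁ v - P₂ v = (PowerSeries.X : PowerSeries k) • w) :
    Set.BijOn P₂ (LinearMap.range P₁ : Set V) (LinearMap.range P₂ : Set V) := by
  have e₁ : ∀ v, P₁ (P₁ v) = P₁ v := fun v => LinearMap.congr_fun h₁ v
  have e₂ : ∀ v, P₂ (P₂ v) = P₂ v := fun v => LinearMap.congr_fun h₂ v
  -- injectivity core
  have key0 : ∀ v : V, P₁ v = v → P₂ v = 0 → v = 0 := by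
    intro v hv1 hv0
    refine IsHausdorff.haus
      (IsAdicComplete.toIsHausdorff (I := Ideal.span {(X : PowerSeries k)})) v ?_
    intro n
    rw [SModEq.zero, mem_span_pow_smul_iff]
    induction n with
    | zero => exact ⟨v, by simp⟩
    | succ n ih =>
      obtain ⟨w, hw⟩ := ih
      obtain ⟨t, ht⟩ := hclose w
      have h1 : v = (X : PowerSeries k) ^ n • P₁ w := by rw [← hv1, hw, map_smul]
      refine ⟨t, ?_⟩
      calc v = (X : PowerSeries k) ^ n • P₁ w := h1
        _ = (X : PowerSeries k) ^ n • (P₁ w - P₂ w) + (X : PowerSeries k) ^ n • P₂ w := by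
            rw [smul_sub]; abel
        _ = (X : PowerSeries k) ^ (n + 1) • t + P₂ ((X : PowerSeries k) ^ n • w) := by
            rw [ht, smul_smul, ← pow_succ, map_smul]
        _ = (X : PowerSeries k) ^ (n + 1) • t := by rw [← hw, hv0, add_zero]
  -- surjectivity core
  have key1 : ∀ u : V, P₂ u = u → ∃ v : V, P₁ v = v ∧ P₂ v = u := by
    intro u hu
    -- remainder sequence
    set r : ℕ → V := fun n => Nat.rec u (fun _ rn => rn - P₂ (P₁ rn)) n with hrdef
    have hr0 : r 0 = u := rfl
    have hrsucc : ∀ n, r (n + 1) = r n - P₂ (P₁ (r n)) := fun n => rfl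
    have hr : ∀ n, P₂ (r n) = r n ∧ ∃ w, r n = (X : PowerSeries k) ^ n • w := by
      intro n
      induction n with
      | zero => exact ⟨hu, u, by simp [hr0]⟩
      | succ n ih =>
        obtain ⟨hfix, w, hw⟩ := ih
        constructor
        · rw [hrsucc, map_sub, hfix, e₂]
        · obtain ⟨t, ht⟩ := hclose w
          have hstep : P₂ w - P₂ (P₁ w) = (X : PowerSeries k) • (-P₂ t) := by
            rw [← e₂ w, ← map_sub,
              show P₂ w - P₁ w = (X : PowerSeries k) • (-t) by rw [smul_neg, ← ht]; abel,
              map_smul, map_neg, smul_neg]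
          refine ⟨-P₂ t, ?_⟩
          calc r (n + 1) = P₂ (r n) - P₂ (P₁ (r n)) := by rw [hrsucc, hfix]
            _ = (X : PowerSeries k) ^ n • P₂ w - (X : PowerSeries k) ^ n • P₂ (P₁ w) := by
                rw [hw, map_smul, map_smul, map_smul]
            _ = (X : PowerSeries k) ^ n • (P₂ w - P₂ (P₁ w)) := (smul_sub _ _ _).symm
            _ = (X : PowerSeries k) ^ (n + 1) • (-P₂ t) := by
                rw [hstep, smul_smul, ← pow_succ]
    -- partial sums
    set f : ℕ → V := fun n => ∑ i ∈ Finset.range n, r i with hfdef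
    have hdiff : ∀ m n, m ≤ n → ∃ w, f n - f m = (X : PowerSeries k) ^ m • w := by
      intro m n hmn
      induction n, hmn using Nat.le_induction with
      | base => exact ⟨0, by simp⟩
      | succ n hmn ih =>
        obtain ⟨w, hw⟩ := ih
        obtain ⟨-, s, hs⟩ := hr n
        refine ⟨w + (X : PowerSeries k) ^ (n - m) • s, ?_⟩
        have hfn : f (n + 1) = f n + r n := Finset.sum_range_succ _ _
        have hpow : (X : PowerSeries k) ^ n = (X : PowerSeries k) ^ m * (X : PowerSeries k) ^ (n - m) := by
          rw [← pow_add, Nat.add_sub_cancel' hmn]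
        rw [hfn, smul_add, ← hw, hs, hpow, mul_smul]
        abel
    have hcau : ∀ {m n : ℕ}, m ≤ n →
        f m ≡ f n [SMOD (Ideal.span {(X : PowerSeries k)} ^ m • ⊤ : Submodule (PowerSeries k) V)] := by
      intro m n hmn
      rw [SModEq.sub_mem, mem_span_pow_smul_iff]
      obtain ⟨w, hw⟩ := hdiff m n hmn
      exact ⟨-w, by rw [smul_neg, ← hw]; abel⟩
    obtain ⟨L, hL⟩ := IsPrecomplete.prec
      (IsAdicComplete.toIsPrecomplete (I := Ideal.span {(X : PowerSeries k)})) hcau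
    refine ⟨P₁ L, e₁ L, ?_⟩
    -- telescoping
    have htel : ∀ n, P₂ (P₁ (f n)) = u - r n := by
      intro n
      induction n with
      | zero => simp [hfdef, hr0]
      | succ n ih =>
        have hfn : f (n + 1) = f n + r n := Finset.sum_range_succ _ _
        rw [hfn, map_add, map_add, ih, hrsucc]
        abel
    refine sub_eq_zero.mp (IsHausdorff.haus
      (IsAdicComplete.toIsHausdorff (I := Ideal.span {(X : PowerSeries k)})) _ ?_)
    intro n
    rw [SModEq.zero, mem_span_pow_smul_iff]
    obtain ⟨w, hw⟩ : ∃ w, L - f n = (X : PowerSeries k) ^ n • w := by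
      obtain ⟨w, hw⟩ := mem_span_pow_smul_iff n _ |>.mp (SModEq.sub_mem.mp (hL n))
      exact ⟨-w, by rw [smul_neg, ← hw]; abel⟩
    obtain ⟨-, s, hs⟩ := hr n
    refine ⟨P₂ (P₁ w) - s, ?_⟩
    have hLsplit : P₂ (P₁ L) = P₂ (P₁ (f n)) + (X : PowerSeries k) ^ n • P₂ (P₁ w) := by
      rw [show L = f n + (X : PowerSeries k) ^ n • w by rw [← hw]; abel,
        map_add, map_add, map_smul, map_smul]
    rw [hLsplit, htel, hs, smul_sub]
    abel
  refine ⟨fun v _ => ⟨v, rfl⟩, ?_, ?_⟩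
  · -- InjOn
    intro a ha b hb hab
    have ha' : P₁ a = a := by obtain ⟨x, rfl⟩ := ha; exact e₁ x
    have hb' : P₁ b = b := by obtain ⟨x, rfl⟩ := hb; exact e₁ x
    exact sub_eq_zero.mp (key0 (a - b) (by rw [map_sub, ha', hb'])
      (by rw [map_sub, hab, sub_self]))
  · -- SurjOn
    rintro u ⟨x, rfl⟩
    obtain ⟨v, hv1, hv2⟩ := key1 (P₂ x) (e₂ x)
    exact ⟨v, ⟨v, hv1⟩, hv2⟩
end

section
/- Let C be a monoidal category, c an object of C, and let Δ : c ⟶ c ⊗ c and ε : c ⟶ 𝟙 be morphisms such that the composite c ⟶Δ c ⊗ c ⟶(ε ⊗ ε) 𝟙 ⊗ 𝟙 ≅ 𝟙 equals ε. Define r := Δ ≫ (ε ▷ c) ≫ λ_c and s := Δ ≫ (c ◁ ε) ≫ ρ_c (both morphisms c ⟶ c), and assume that r and s are isomorphisms. Then the morphism Δ' := Δ ≫ (s⁻¹ ⊗ r⁻¹) together with ε satisfies both counit identities: Δ' ≫ (ε ▷ c) ≫ λ_c = 𝟙_c and Δ' ≫ (c ◁ ε) ≫ ρ_c = 𝟙_c.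 -/
open CategoryTheory MonoidalCategory

/-!
Since `ε ⊗ ε` factors as `ε ▷ 𝟙 ≫ 𝟙 ◁ ε` and as `𝟙 ◁ ε ≫ ε ▷ 𝟙`, the hypothesis on `ε ⊗ ε` says
exactly that `r ≫ ε = ε` and `s ≫ ε = ε`, hence also `s⁻¹ ≫ ε = ε` and `r⁻¹ ≫ ε = ε`. So the left
counit applied to `Δ ≫ (s⁻¹ ⊗ r⁻¹)` erases `s⁻¹` and leaves `r ≫ r⁻¹ = 𝟙`; symmetrically on the
right.
-/

namespace CategoryTheory.MonoidalCategory

variable {C : Type*} [Category C] [MonoidalCategory C]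

lemma whiskerRight_leftUnitor_comp {b d : C} (f : b ⟶ 𝟙_ C) (g : d ⟶ 𝟙_ C) :
    (f ▷ d) ≫ (λ_ d).hom ≫ g = (f ⊗ₘ g) ≫ (λ_ (𝟙_ C)).hom := by
  rw [← leftUnitor_naturality, tensorHom_def, Category.assoc]

lemma whiskerLeft_rightUnitor_comp {b d : C} (f : b ⟶ 𝟙_ C) (g : d ⟶ 𝟙_ C) :
    (b ◁ g) ≫ (ρ_ b).hom ≫ f = (f ⊗ₘ g) ≫ (λ_ (𝟙_ C)).hom := by
  rw [← rightUnitor_naturality, tensorHom_def', Category.assoc, unitors_equal]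

lemma comp_tensorHom_whiskerRight_leftUnitor {a x y b d : C} (Δ : a ⟶ x ⊗ y) (f : x ⟶ b)
    (g : y ⟶ d) (e : b ⟶ 𝟙_ C) :
    Δ ≫ (f ⊗ₘ g) ≫ (e ▷ d) ≫ (λ_ d).hom = (Δ ≫ ((f ≫ e) ▷ y) ≫ (λ_ y).hom) ≫ g := by
  simp only [tensorHom_def, Category.assoc, whisker_exchange_assoc, leftUnitor_naturality,
    comp_whiskerRight_assoc]

lemma comp_tensorHom_whiskerLeft_rightUnitor {a x y b d : C} (Δ : a ⟶ x ⊗ y) (f : x ⟶ b)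
    (g : y ⟶ d) (e : d ⟶ 𝟙_ C) :
    Δ ≫ (f ⊗ₘ g) ≫ (b ◁ e) ≫ (ρ_ b).hom = (Δ ≫ (x ◁ (g ≫ e)) ≫ (ρ_ x).hom) ≫ f := by
  simp only [tensorHom_def', Category.assoc, ← whisker_exchange_assoc, rightUnitor_naturality,
    whiskerLeft_comp_assoc]

end CategoryTheory.MonoidalCategory

/-- Repairing a failed counit: if `Δ : c ⟶ c ⊗ c`, `ε : c ⟶ 𝟙` satisfy
`(ε ⊗ ε) ∘ Δ = ε` (via the unitor `𝟙 ⊗ 𝟙 ≅ 𝟙`) and the morphisms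
`r = Δ ≫ (ε ▷ c) ≫ λ_c` and `s = Δ ≫ (c ◁ ε) ≫ ρ_c` are isomorphisms, then
`Δ' = Δ ≫ (s⁻¹ ⊗ r⁻¹)` together with `ε` satisfies both counit identities. -/
theorem repaired_counit {C : Type*} [Category C] [MonoidalCategory C] (c : C)
    (Δ : c ⟶ c ⊗ c) (ε : c ⟶ 𝟙_ C)
    (hεε : Δ ≫ (ε ⊗ₘ ε) ≫ (λ_ (𝟙_ C)).hom = ε)
    (r s : c ⟶ c)
    (hr : r = Δ ≫ (ε ▷ c) ≫ (λ_ c).hom)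
    (hs : s = Δ ≫ (c ◁ ε) ≫ (ρ_ c).hom)
    [IsIso r] [IsIso s] :
    (Δ ≫ (inv s ⊗ₘ inv r)) ≫ (ε ▷ c) ≫ (λ_ c).hom = 𝟙 c ∧
      (Δ ≫ (inv s ⊗ₘ inv r)) ≫ (c ◁ ε) ≫ (ρ_ c).hom = 𝟙 c := by
  have hrε : r ≫ ε = ε := by
    rw [hr, Category.assoc, Category.assoc, whiskerRight_leftUnitor_comp, hεε]
  have hsε : s ≫ ε = ε := by
    rw [hs, Category.assoc, Category.assoc, whiskerLeft_rightUnitor_comp, hεε]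
  have hrε' : inv r ≫ ε = ε := by rw [IsIso.inv_comp_eq, hrε]
  have hsε' : inv s ≫ ε = ε := by rw [IsIso.inv_comp_eq, hsε]
  constructor
  · rw [Category.assoc, comp_tensorHom_whiskerRight_leftUnitor, hsε', ← hr, IsIso.hom_inv_id]
  · rw [Category.assoc, comp_tensorHom_whiskerLeft_rightUnitor, hrε', ← hs, IsIso.hom_inv_id]
end

section
/- Let J be a nonempty category in which every pair of objects a, b admits an object c together with morphisms c → a and c → b (for instance, any cofiltered category), and let F : J ⥤ Top be a functor to topological spaces. Let M be a topological space equipped with a cone over F, i.e., continuous maps φ_j : M → F(j) natural in j, and let φ̃ : M → lim F be the induced continuous map into the limit. If every φ_j has dense range, then φ̃ has dense range. -/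
/-!
The limit carries the initial topology of the projections `π_j`. Because any two objects of `J`
have a common object above them, the neighbourhood filters pulled back along the `π_j` form a
directed family, so every neighbourhood of a point of the limit contains some `π_j⁻¹' s` with `s`
a neighbourhood in `F j`; that set meets the image of `φ̃` since `π_j ∘ φ̃ = φ_j` has dense range.
-/

open CategoryTheory Limits Filter Topology

universe u

namespace TopCat

variable {J : Type u} [SmallCategory J] {F : J ⥤ TopCat.{u}}

theorem nhds_eq_iInf_comap_of_isLimit {C : Cone F} (hC : IsLimit C) (x : C.pt) :
    𝓝 x = ⨅ j, comap (C.π.app j) (𝓝 (C.π.app j x)) := by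
  rw [TopologicalSpace.ext_iff_nhds.mp (induced_of_isLimit C hC) x, nhds_iInf]
  simp only [nhds_induced]

theorem directed_comap_nhds_cone (hJ : ∀ a b : J, ∃ (c : J) (_ : c ⟶ a) (_ : c ⟶ b), True)
    (C : Cone F) (x : C.pt) :
    Directed (· ≥ ·) fun j => (comap (C.π.app j) (𝓝 (C.π.app j x)) : Filter C.pt) := by
  have comap_le {c a : J} (f : c ⟶ a) :
      comap (C.π.app c) (𝓝 (C.π.app c x)) ≤ comap (C.π.app a) (𝓝 (C.π.app a x)) := by
    rw [← C.w f, ConcreteCategory.coe_comp, ← comap_comap]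
    exact comap_mono ((F.map f).hom.continuous.tendsto _).le_comap
  intro a b
  obtain ⟨c, f, g, -⟩ := hJ a b
  exact ⟨c, comap_le f, comap_le g⟩

theorem denseRange_lift_of_isLimit [Nonempty J]
    (hJ : ∀ a b : J, ∃ (c : J) (_ : c ⟶ a) (_ : c ⟶ b), True)
    {C : Cone F} (hC : IsLimit C) (cn : Cone F) (hdense : ∀ j, DenseRange (cn.π.app j)) :
    DenseRange (hC.lift cn) := by
  intro x
  rw [mem_closure_iff_nhds]
  intro t ht
  rw [nhds_eq_iInf_comap_of_isLimit hC, mem_iInf_of_directed (directed_comap_nhds_cone hJ C x)]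
    at ht
  obtain ⟨j, s, hs, hst⟩ := ht
  obtain ⟨_, hms, m, rfl⟩ := mem_closure_iff_nhds.mp (hdense j (C.π.app j x)) s hs
  refine ⟨hC.lift cn m, hst ?_, m, rfl⟩
  rwa [Set.mem_preimage, ← ConcreteCategory.comp_apply, hC.fac]

end TopCat

/-- Let `J` be a nonempty category in which any two objects `a, b` admit
an object `c` with morphisms `c ⟶ a` and `c ⟶ b`, let `F : J ⥤ Top`, and let `M` be a space
with a cone over `F` all of whose legs have dense range.  Then the induced map into the limit
has dense range. -/
theorem dense_image_in_limit {J : Type u} [SmallCategory J] [Nonempty J]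
    (hJ : ∀ a b : J, ∃ (c : J) (_ : c ⟶ a) (_ : c ⟶ b), True)
    (F : J ⥤ TopCat.{u}) (cn : Cone F)
    (hdense : ∀ j : J, DenseRange ⇑(cn.π.app j)) :
    DenseRange ⇑(limit.lift F cn) :=
  TopCat.denseRange_lift_of_isLimit hJ (limit.isLimit F) cn hdense
end

section
/- Let k be a field and V a k-vector space. Equip the full linear dual V* = Hom_k(V, k) with the topology of pointwise convergence, i.e., the subspace topology induced from the product topology on the space of all functions V → k, where k carries the discrete topology. Then the canonical evaluation map from V to the space of continuous linear functionals on V*, sending v to the functional ξ ↦ ξ(v), is a linear bijection: every linear functional Φ : V* → k that is continuous with respect to this topology is evaluation at a unique vector v ∈ V. -/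
/-- Let `V` be a vector space over a field `k`, and endow the full linear dual
`V* = V →ₗ[k] k` with the topology of pointwise convergence (the topology induced from the
product topology on `V → k`, with `k` discrete).  Then the canonical evaluation map from `V`
to the continuous linear functionals on `V*` is a linear bijection: every `⊥`-continuous linear
functional `Φ : V* → k` is evaluation at a unique `v ∈ V`, and conversely every evaluation
functional is continuous. -/
theorem double_dual_of_discrete (k V : Type*) [Field k] [AddCommGroup V] [Module k V] :
    (∀ v : V,
      @Continuous (V →ₗ[k] k) k
        (TopologicalSpace.induced (fun ξ : V →ₗ[k] k => (ξ : V → k))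
          (@Pi.topologicalSpace V (fun _ => k) (fun _ => ⊥)))
        ⊥ (fun ξ : V →ₗ[k] k => ξ v)) ∧
    (∀ Φ : (V →ₗ[k] k) →ₗ[k] k,
      @Continuous (V →ₗ[k] k) k
        (TopologicalSpace.induced (fun ξ : V →ₗ[k] k => (ξ : V → k))
          (@Pi.topologicalSpace V (fun _ => k) (fun _ => ⊥)))
        ⊥ ⇑Φ →
      ∃! v : V, ∀ ξ : V →ₗ[k] k, Φ ξ = ξ v) := by
  letI : TopologicalSpace k := ⊥
  haveI : DiscreteTopology k := ⟨rfl⟩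
  letI tP : TopologicalSpace (V → k) := Pi.topologicalSpace
  letI tI : TopologicalSpace (V →ₗ[k] k) :=
    TopologicalSpace.induced (fun ξ : V →ₗ[k] k => (ξ : V → k)) tP
  constructor
  · intro v
    exact (continuous_apply v).comp continuous_induced_dom
  · intro Φ hΦ
    -- Φ ⁻¹' {0} is open
    have hopen : IsOpen (⇑Φ ⁻¹' {0}) := hΦ.isOpen_preimage _ (isOpen_discrete _)
    rw [isOpen_induced_iff] at hopen
    obtain ⟨t, ht, hpre⟩ := hopen
    have h0 : ((0 : V →ₗ[k] k) : V → k) ∈ t := by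
      have : (0 : V →ₗ[k] k) ∈ ⇑Φ ⁻¹' {0} := by simp
      rw [← hpre] at this; exact this
    obtain ⟨I, u, hu, hsub⟩ := (isOpen_pi_iff.mp ht) _ h0
    have key : ∀ ξ : V →ₗ[k] k, (∀ w ∈ I, ξ w = 0) → Φ ξ = 0 := by
      intro ξ hξ
      have : (ξ : V → k) ∈ t := by
        apply hsub
        intro w hw
        rw [hξ w hw]
        simpa using (hu w hw).2
      have : ξ ∈ ⇑Φ ⁻¹' {0} := by rw [← hpre]; exact this
      simpa using this
    -- linear algebra
    let π : (V →ₗ[k] k) →ₗ[k] (↥I → k) :=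
      LinearMap.pi fun w : ↥I => Module.Dual.eval k V (w : V)
    have hker : LinearMap.ker π ≤ LinearMap.ker Φ := by
      intro ξ hξ
      rw [LinearMap.mem_ker] at hξ ⊢
      apply key
      intro w hw
      have := congrFun hξ ⟨w, hw⟩
      simpa [π] using this
    let e := π.quotKerEquivRange
    let ψ₀ : ↥(LinearMap.range π) →ₗ[k] k :=
      ((LinearMap.ker π).liftQ Φ hker).comp e.symm.toLinearMap
    have hψ₀ : ∀ ξ : V →ₗ[k] k, ψ₀ ⟨π ξ, ⟨ξ, rfl⟩⟩ = Φ ξ := by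
      intro ξ
      have h1 : e.symm ⟨π ξ, ⟨ξ, rfl⟩⟩ = Submodule.Quotient.mk ξ := by
        rw [LinearEquiv.symm_apply_eq]
        exact Subtype.ext (π.quotKerEquivRange_apply_mk ξ).symm
      simp only [ψ₀, LinearMap.comp_apply, LinearEquiv.coe_toLinearMap, h1]
      exact Submodule.liftQ_apply _ _ _
    obtain ⟨ψ, hψ⟩ := LinearMap.exists_extend ψ₀
    have hψ' : ∀ ξ : V →ₗ[k] k, ψ (π ξ) = Φ ξ := by
      intro ξ
      have := congrArg (fun g => g ⟨π ξ, ⟨ξ, rfl⟩⟩) hψ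
      simpa [hψ₀ ξ] using this
    classical
    set v0 : V := ∑ w : ↥I, ψ (Pi.single w 1) • (w : V) with hv0
    have hval : ∀ ξ : V →ₗ[k] k, Φ ξ = ξ v0 := by
      intro ξ
      rw [← hψ' ξ, hv0]
      have hπ : π ξ = ∑ w : ↥I, Pi.single w (ξ w) := (Finset.univ_sum_single _).symm
      rw [hπ, map_sum, map_sum]
      refine Finset.sum_congr rfl fun w _ => ?_
      have hs : (Pi.single w (ξ (w : V)) : ↥I → k) = ξ (w : V) • (Pi.single w 1 : ↥I → k) := by
        funext j
        simp [Pi.single_apply, mul_ite]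
      rw [hs, map_smul, map_smul, smul_eq_mul, smul_eq_mul, mul_comm]
    refine ⟨v0, hval, ?_⟩
    intro v hv
    have hz : ∀ ξ : V →ₗ[k] k, ξ (v - v0) = 0 := fun ξ => by
      rw [map_sub, ← hv ξ, ← hval ξ, sub_self]
    exact sub_eq_zero.mp ((Module.forall_dual_apply_eq_zero_iff k _).mp hz)
end

section
/- Let k be a field regarded with the discrete topology, and let K be a topological k-vector space (a topological additive group on which every scalar multiplication is continuous) with the property that for every open k-linear subspace V ⊆ K the quotient K/V is finite-dimensional over k. Let X be a k-vector space equipped with the discrete topology. Then the canonical linear map X ⊗_k K' → L(K, X), sending x ⊗ φ to the map v ↦ φ(v)·x, is bijective; here K' denotes the space of continuous linear functionals K → k and L(K, X) the space of continuous k-linear maps K → X. -/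
/-!
A continuous linear map `f : K → X` into a discrete space has an open kernel `V`, so it factors
through the finite-dimensional quotient `K ⧸ V`. Expanding in a basis `(bᵢ)` of `K ⧸ V` gives
`f = ∑ᵢ f(bᵢ) ⊗ (bᵢ* ∘ π)`, and each coordinate functional `bᵢ* ∘ π` is continuous because its
kernel contains the open subspace `V`. Injectivity is pure linear algebra: in a basis of `X`,
an element of `X ⊗ K'` is a finitely supported family of functionals, which can be read off
from its image.
-/

open scoped TensorProduct

theorem LinearMap.continuous_bot_iff_isOpen_ker {R K M : Type*} [Semiring R] [AddCommGroup K]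
    [Module R K] [TopologicalSpace K] [IsTopologicalAddGroup K] [AddCommGroup M] [Module R M]
    (f : K →ₗ[R] M) :
    @Continuous K M _ ⊥ f ↔ IsOpen (LinearMap.ker f : Set K) := by
  let : TopologicalSpace M := ⊥
  have : DiscreteTopology M := discreteTopology_bot M
  refine ⟨fun hf => (isOpen_discrete {0}).preimage hf, fun hf => ?_⟩
  apply continuous_of_continuousAt_zero f
  rw [ContinuousAt, nhds_discrete M, map_zero, Filter.tendsto_pure]
  exact hf.mem_nhds (map_zero f)

section TensorDual

variable {k K X : Type*} [Field k] [AddCommGroup K] [Module k K] [AddCommGroup X] [Module k X]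
  {K' : Submodule k (K →ₗ[k] k)} (ev : X ⊗[k] K' →ₗ[k] K →ₗ[k] X)

theorem injective_of_apply_tmul_eq_smul
    (hev : ∀ (x : X) (φ : K') (v : K), ev (x ⊗ₜ[k] φ) v = (φ : K →ₗ[k] k) v • x) :
    Function.Injective ev := by
  classical
  let b := Module.Basis.ofVectorSpace k X
  let e : X ⊗[k] K' ≃ₗ[k] (Module.Basis.ofVectorSpaceIndex k X →₀ K') :=
    (TensorProduct.congr b.repr (LinearEquiv.refl k K')).trans
      (TensorProduct.finsuppScalarLeft k K' _)
  have coord_ev : ∀ t i v, (e t i : K →ₗ[k] k) v = b.repr (ev t v) i := by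
    intro t
    induction t using TensorProduct.induction_on with
    | zero => simp
    | tmul x φ =>
      intro i v
      simp [e, TensorProduct.finsuppScalarLeft_apply_tmul_apply, hev, mul_comm]
    | add s t hs ht =>
      intro i v
      simp only [map_add, Finsupp.add_apply, Submodule.coe_add, LinearMap.add_apply, hs, ht]
  rw [injective_iff_map_eq_zero]
  intro t ht
  apply e.injective
  ext i v
  simp [coord_ev, ht]

theorem continuous_of_apply_tmul_eq_smul [TopologicalSpace K]
    (hev : ∀ (x : X) (φ : K') (v : K), ev (x ⊗ₜ[k] φ) v = (φ : K →ₗ[k] k) v • x)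
    (hK' : ∀ φ ∈ K', @Continuous K k _ ⊥ φ) (t : X ⊗[k] K') :
    @Continuous K X _ ⊥ (ev t) := by
  let : TopologicalSpace X := ⊥
  let : TopologicalSpace k := ⊥
  have : DiscreteTopology X := discreteTopology_bot X
  have : DiscreteTopology k := discreteTopology_bot k
  induction t using TensorProduct.induction_on with
  | zero => rw [map_zero]; exact continuous_const
  | tmul x φ =>
    have : ⇑(ev (x ⊗ₜ[k] φ)) = (fun c : k => c • x) ∘ (φ : K →ₗ[k] k) :=
      funext (hev x φ)
    rw [this]
    exact continuous_of_discreteTopology.comp (hK' φ φ.2)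
  | add s t hs ht => rw [map_add]; exact hs.add ht

theorem mem_range_of_apply_tmul_eq_smul
    (hev : ∀ (x : X) (φ : K') (v : K), ev (x ⊗ₜ[k] φ) v = (φ : K →ₗ[k] k) v • x)
    (V : Submodule k K) [FiniteDimensional k (K ⧸ V)]
    (hK' : ∀ φ : K →ₗ[k] k, V ≤ LinearMap.ker φ → φ ∈ K')
    (f : K →ₗ[k] X) (hf : V ≤ LinearMap.ker f) : f ∈ Set.range ev := by
  let g : (K ⧸ V) →ₗ[k] X := V.liftQ f hf
  let B := Module.Free.chooseBasis k (K ⧸ V)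
  have coord_mem : ∀ i, (B.coord i).comp V.mkQ ∈ K' := fun i =>
    hK' _ (V.ker_mkQ.ge.trans (LinearMap.ker_le_ker_comp _ _))
  refine ⟨∑ i, g (B i) ⊗ₜ[k] ⟨(B.coord i).comp V.mkQ, coord_mem i⟩, ?_⟩
  ext v
  calc (ev (∑ i, g (B i) ⊗ₜ[k] ⟨(B.coord i).comp V.mkQ, coord_mem i⟩)) v
      = ∑ i, B.repr (V.mkQ v) i • g (B i) := by
        rw [map_sum, LinearMap.sum_apply]
        exact Finset.sum_congr rfl fun i _ => hev _ _ _
    _ = g (∑ i, B.repr (V.mkQ v) i • B i) := by simp only [map_sum, map_smul]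
    _ = g (V.mkQ v) := by rw [B.sum_repr]
    _ = f v := rfl

end TensorDual

theorem tensor_with_dual_of_bounded_general (k : Type*) [Field k]
    (K : Type*) [AddCommGroup K] [Module k K] [TopologicalSpace K] [IsTopologicalAddGroup K]
    (hbdd : ∀ V : Submodule k K, IsOpen (V : Set K) → FiniteDimensional k (K ⧸ V))
    (X : Type*) [AddCommGroup X] [Module k X]
    (K' : Submodule k (K →ₗ[k] k))
    (hK' : ∀ φ : K →ₗ[k] k, φ ∈ K' ↔ @Continuous K k _ ⊥ ⇑φ)
    (ev : (X ⊗[k] K') →ₗ[k] (K →ₗ[k] X))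
    (hev : ∀ (x : X) (φ : K') (v : K), ev (x ⊗ₜ[k] φ) v = (φ : K →ₗ[k] k) v • x) :
    Function.Injective ⇑ev ∧
      Set.range ⇑ev = {f : K →ₗ[k] X | @Continuous K X _ ⊥ ⇑f} := by
  refine ⟨injective_of_apply_tmul_eq_smul ev hev, Set.Subset.antisymm ?_ fun f hf => ?_⟩
  · rintro _ ⟨t, rfl⟩
    exact continuous_of_apply_tmul_eq_smul ev hev (fun φ hφ => (hK' φ).1 hφ) t
  · have hker := (LinearMap.continuous_bot_iff_isOpen_ker f).1 hf
    have := hbdd _ hker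
    refine mem_range_of_apply_tmul_eq_smul ev hev _ (fun φ hφ => ?_) f le_rfl
    exact (hK' φ).2 <|
      (LinearMap.continuous_bot_iff_isOpen_ker φ).2 (Submodule.isOpen_mono hφ hker)

/-- Let `k` be a discrete field, `K` a topological `k`-vector space
(a topological additive group with continuous scalar multiplications) such that `K/V` is
finite dimensional for every open linear subspace `V ⊆ K`, and let `X` be a discrete
`k`-vector space.  Let `K'` be the submodule of the dual consisting of the continuous
functionals (continuity w.r.t. the discrete topology `⊥` on `k`).  Then the canonical
linear map `X ⊗ K' → L(K, X)`, `x ⊗ φ ↦ (v ↦ φ(v) • x)`, is injective and its range is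
exactly the set of continuous linear maps `K → X` (`X` discrete), i.e. it is a bijection
onto `L(K, X)`. -/
theorem tensor_with_dual_of_bounded (k : Type*) [Field k]
    (K : Type*) [AddCommGroup K] [Module k K] [TopologicalSpace K] [IsTopologicalAddGroup K]
    (hsmul : ∀ c : k, Continuous fun x : K => c • x)
    (hbdd : ∀ V : Submodule k K, IsOpen (V : Set K) → FiniteDimensional k (K ⧸ V))
    (X : Type*) [AddCommGroup X] [Module k X]
    (K' : Submodule k (K →ₗ[k] k))
    (hK' : ∀ φ : K →ₗ[k] k, φ ∈ K' ↔ @Continuous K k _ ⊥ ⇑φ)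
    (ev : (X ⊗[k] K') →ₗ[k] (K →ₗ[k] X))
    (hev : ∀ (x : X) (φ : K') (v : K), ev (x ⊗ₜ[k] φ) v = (φ : K →ₗ[k] k) v • x) :
    Function.Injective ⇑ev ∧
      Set.range ⇑ev = {f : K →ₗ[k] X | @Continuous K X _ ⊥ ⇑f} :=
  tensor_with_dual_of_bounded_general k K hbdd X K' hK' ev hev
end

section
/- Let k be a field of characteristic zero, L a Lie algebra over k, U its universal enveloping algebra and ι : L → U the canonical map. For an element a = Σ_i a_i ⊗ b_i ∈ L ⊗ L and indices 1 ≤ i < j ≤ 3, write a^{ij} for the element of U ⊗ U ⊗ U obtained by placing ι(a_i) in tensor slot i, ι(b_i) in tensor slot j, and 1 in the remaining slot. Suppose t ∈ L ⊗ L is invariant under the diagonal adjoint action, i.e., for every x ∈ L one has (ad x ⊗ id + id ⊗ ad x)(t) = 0 in L ⊗ L, and suppose f ∈ L ⊗ L is antisymmetric, i.e., the flip map sends f to −f. Then in U ⊗ U ⊗ U the sum of mixed commutators vanishes: [t^{12}, f^{13}] + [t^{12}, f^{23}] + [t^{13}, f^{23}] + [f^{12}, t^{13}] + [f^{12}, t^{23}]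 + [f^{13}, t^{23}] = 0. Consequently CYB(t + f) = CYB(t) + CYB(f), where CYB(r) := [r^{12}, r^{13}] + [r^{12}, r^{23}] + [r^{13}, r^{23}]. -/
open scoped TensorProduct

namespace QuasiLieBialgebraTwist

variable (k : Type*) [Field k] [CharZero k]
variable (L : Type*) [LieRing L] [LieAlgebra k L]

/-- The universal enveloping algebra of `L`, abbreviated. -/
local notation "U" => UniversalEnvelopingAlgebra k L

attribute [local instance 100] LieRing.ofAssociativeRing

/-- The canonical map `ι : L → U` as a `k`-linear map. -/
noncomputable def iota : L →ₗ[k] UniversalEnvelopingAlgebra k L :=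
  (UniversalEnvelopingAlgebra.ι k).toLinearMap

/-- `a = Σ aᵢ ⊗ bᵢ ↦ Σ ι(aᵢ) ⊗ ι(bᵢ) ⊗ 1`, placement in tensor slots `1, 2` of `U ⊗ U ⊗ U`. -/
noncomputable def ins12 : L ⊗[k] L →ₗ[k]
    (UniversalEnvelopingAlgebra k L ⊗[k]
      (UniversalEnvelopingAlgebra k L ⊗[k] UniversalEnvelopingAlgebra k L)) :=
  (TensorProduct.map LinearMap.id
      ((TensorProduct.mk k (UniversalEnvelopingAlgebra k L)
        (UniversalEnvelopingAlgebra k L)).flip 1)).comp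
    (TensorProduct.map (iota k L) (iota k L))

/-- `a = Σ aᵢ ⊗ bᵢ ↦ Σ ι(aᵢ) ⊗ 1 ⊗ ι(bᵢ)`, placement in tensor slots `1, 3` of `U ⊗ U ⊗ U`. -/
noncomputable def ins13 : L ⊗[k] L →ₗ[k]
    (UniversalEnvelopingAlgebra k L ⊗[k]
      (UniversalEnvelopingAlgebra k L ⊗[k] UniversalEnvelopingAlgebra k L)) :=
  (TensorProduct.map LinearMap.id
      (TensorProduct.mk k (UniversalEnvelopingAlgebra k L)
        (UniversalEnvelopingAlgebra k L) 1)).comp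
    (TensorProduct.map (iota k L) (iota k L))

/-- `a = Σ aᵢ ⊗ bᵢ ↦ Σ 1 ⊗ ι(aᵢ) ⊗ ι(bᵢ)`, placement in tensor slots `2, 3` of `U ⊗ U ⊗ U`. -/
noncomputable def ins23 : L ⊗[k] L →ₗ[k]
    (UniversalEnvelopingAlgebra k L ⊗[k]
      (UniversalEnvelopingAlgebra k L ⊗[k] UniversalEnvelopingAlgebra k L)) :=
  (TensorProduct.mk k (UniversalEnvelopingAlgebra k L)
      (UniversalEnvelopingAlgebra k L ⊗[k] UniversalEnvelopingAlgebra k L) 1).comp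
    (TensorProduct.map (iota k L) (iota k L))

/-- The commutator `[a, b] = a * b - b * a` in an associative ring. -/
def comm {A : Type*} [Ring A] (a b : A) : A := a * b - b * a

/-- The left-hand side of the classical Yang–Baxter equation,
`CYB(r) = [r¹², r¹³] + [r¹², r²³] + [r¹³, r²³]`, an element of `U ⊗ U ⊗ U`. -/
noncomputable def CYB (r : L ⊗[k] L) :
    UniversalEnvelopingAlgebra k L ⊗[k]
      (UniversalEnvelopingAlgebra k L ⊗[k] UniversalEnvelopingAlgebra k L) :=
  comm (ins12 k L r) (ins13 k L r) + comm (ins12 k L r) (ins23 k L r)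
    + comm (ins13 k L r) (ins23 k L r)

end QuasiLieBialgebraTwist

/-!
Write `a¹ = ι a ⊗ 1 ⊗ 1`, `a² = 1 ⊗ ι a ⊗ 1`, `a³ = 1 ⊗ 1 ⊗ ι a`. Invariance of `t` says that
`t¹²` commutes with `a¹ + a²` and `t²³` with `a² + a³`. For `g = a ⊗ b` we have
`g¹³ + g²³ = (a¹ + a²) b³` and `g¹² + g¹³ = a¹ (b² + b³)`, so the pairs
`[t¹², g¹³ + g²³]` and `[g¹² + g¹³, t²³]` of mixed terms vanish for every `g`. The remaining pair
`[t¹³, g²³ - g¹²]` is not zero in general, but invariance of `t` makes it symmetric in `g`,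
so it vanishes on the antisymmetric `f` because `2` is invertible in `k`.
-/

namespace QuasiLieBialgebraTwist

open TensorProduct LieAlgebra

attribute [local instance 100] LieRing.ofAssociativeRing

variable {k : Type*} [Field k] {L : Type*} [LieRing L] [LieAlgebra k L]

lemma comm_eq_lie {A : Type*} [Ring A] (a b : A) : comm a b = ⁅a, b⁆ :=
  (Ring.lie_def a b).symm

lemma map_ad_id_add_map_id_ad_apply (x : L) (t : L ⊗[k] L) :
    (TensorProduct.map (ad k L x : L →ₗ[k] L) (LinearMap.id : L →ₗ[k] L)
      + TensorProduct.map (LinearMap.id : L →ₗ[k] L) (ad k L x : L →ₗ[k] L)) t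
      = ⁅x, t⁆ := by
  induction t using TensorProduct.induction_on with
  | zero => simp
  | tmul u v => simp [LieModule.lie_tmul_right]
  | add t t' ht ht' => rw [map_add, ht, ht', lie_add]

lemma iota_lie (x y : L) : iota k L ⁅x, y⁆ = ⁅iota k L x, iota k L y⁆ :=
  LieHom.map_lie _ x y

@[simp] lemma ins12_tmul (u v : L) :
    ins12 k L (u ⊗ₜ v) = iota k L u ⊗ₜ (iota k L v ⊗ₜ 1) := rfl

@[simp] lemma ins13_tmul (u v : L) :
    ins13 k L (u ⊗ₜ v) = iota k L u ⊗ₜ (1 ⊗ₜ iota k L v) := rfl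

@[simp] lemma ins23_tmul (u v : L) :
    ins23 k L (u ⊗ₜ v) = 1 ⊗ₜ (iota k L u ⊗ₜ iota k L v) := rfl

lemma lie_ins12_ins13_add_ins23_tmul (t : L ⊗[k] L) (a b : L) :
    ⁅ins12 k L t, ins13 k L (a ⊗ₜ b) + ins23 k L (a ⊗ₜ b)⁆
      = -(ins12 k L ⁅a, t⁆ * (1 ⊗ₜ (1 ⊗ₜ iota k L b))) := by
  induction t using TensorProduct.induction_on with
  | zero => simp
  | tmul u v =>
    simp only [ins12_tmul, ins13_tmul, ins23_tmul, LieModule.lie_tmul_right, map_add, iota_lie,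
      Ring.lie_def, Algebra.TensorProduct.tmul_mul_tmul, one_mul, mul_one, sub_tmul, tmul_sub,
      mul_add, add_mul, sub_mul]
    abel
  | add t t' ht ht' => rw [map_add, add_lie, ht, ht', lie_add, map_add, add_mul, neg_add]

lemma lie_ins23_ins12_add_ins13_tmul (t : L ⊗[k] L) (a b : L) :
    ⁅ins23 k L t, ins12 k L (a ⊗ₜ b) + ins13 k L (a ⊗ₜ b)⁆
      = -(iota k L a ⊗ₜ (1 ⊗ₜ 1) * ins23 k L ⁅b, t⁆) := by
  induction t using TensorProduct.induction_on with
  | zero => simp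
  | tmul u v =>
    simp only [ins12_tmul, ins13_tmul, ins23_tmul, LieModule.lie_tmul_right, map_add, iota_lie,
      Ring.lie_def, Algebra.TensorProduct.tmul_mul_tmul, one_mul, mul_one, sub_tmul, tmul_sub,
      mul_add, add_mul, mul_sub]
    abel
  | add t t' ht ht' => rw [map_add, add_lie, ht, ht', lie_add, map_add, mul_add, neg_add]

lemma lie_ins13_ins23_sub_ins12_tmul_sub_swap (t : L ⊗[k] L) (a b : L) :
    ⁅ins13 k L t, ins23 k L (a ⊗ₜ b) - ins12 k L (a ⊗ₜ b)⁆
        - ⁅ins13 k L t, ins23 k L (b ⊗ₜ a) - ins12 k L (b ⊗ₜ a)⁆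
      = 1 ⊗ₜ (iota k L b ⊗ₜ 1) * ins13 k L ⁅a, t⁆ - 1 ⊗ₜ (iota k L a ⊗ₜ 1) * ins13 k L ⁅b, t⁆ := by
  induction t using TensorProduct.induction_on with
  | zero => simp
  | tmul u v =>
    simp only [ins12_tmul, ins13_tmul, ins23_tmul, LieModule.lie_tmul_right, map_add, iota_lie,
      Ring.lie_def, Algebra.TensorProduct.tmul_mul_tmul, one_mul, mul_one, sub_tmul, tmul_sub,
      mul_add, sub_mul, mul_sub]
    abel
  | add t t' ht ht' =>
    rw [map_add, add_lie, add_lie, add_sub_add_comm, ht, ht', lie_add, lie_add, map_add, map_add,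
      mul_add, mul_add, add_sub_add_comm]

lemma ad_ins12_comp_ins13_add_ins23 {t : L ⊗[k] L} (ht : ∀ x : L, ⁅x, t⁆ = 0) :
    ad k _ (ins12 k L t) ∘ₗ (ins13 k L + ins23 k L) = 0 :=
  TensorProduct.ext' fun a b ↦ by
    rw [LinearMap.comp_apply, LinearMap.add_apply, ad_apply, lie_ins12_ins13_add_ins23_tmul, ht,
      map_zero, zero_mul, neg_zero, LinearMap.zero_apply]

lemma ad_ins23_comp_ins12_add_ins13 {t : L ⊗[k] L} (ht : ∀ x : L, ⁅x, t⁆ = 0) :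
    ad k _ (ins23 k L t) ∘ₗ (ins12 k L + ins13 k L) = 0 :=
  TensorProduct.ext' fun a b ↦ by
    rw [LinearMap.comp_apply, LinearMap.add_apply, ad_apply, lie_ins23_ins12_add_ins13_tmul, ht,
      map_zero, mul_zero, neg_zero, LinearMap.zero_apply]

lemma ad_ins13_comp_ins23_sub_ins12_comp_comm {t : L ⊗[k] L} (ht : ∀ x : L, ⁅x, t⁆ = 0) :
    (ad k _ (ins13 k L t) ∘ₗ (ins23 k L - ins12 k L)) ∘ₗ TensorProduct.comm k L L
      = ad k _ (ins13 k L t) ∘ₗ (ins23 k L - ins12 k L) :=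
  TensorProduct.ext' fun a b ↦ by
    simpa [ht, sub_eq_zero] using lie_ins13_ins23_sub_ins12_tmul_sub_swap t b a

lemma apply_eq_zero_of_comp_comm_eq_self {R M P : Type*} [Field R] [CharZero R]
    [AddCommGroup M] [Module R M] [AddCommGroup P] [Module R P] {φ : M ⊗[R] M →ₗ[R] P}
    (hφ : φ ∘ₗ TensorProduct.comm R M M = φ) {f : M ⊗[R] M} (hf : TensorProduct.comm R M M f = -f) :
    φ f = 0 := by
  have h : φ f = -φ f := calc
    φ f = (φ ∘ₗ TensorProduct.comm R M M) f := by rw [hφ]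
    _ = -φ f := by rw [LinearMap.comp_apply, LinearEquiv.coe_coe, hf, map_neg]
  have h2 : (2 : R) • φ f = 0 := by rw [two_smul]; nth_rewrite 2 [h]; exact add_neg_cancel _
  exact (smul_eq_zero.mp h2).resolve_left two_ne_zero

noncomputable def cybCross (r s : L ⊗[k] L) :
    UniversalEnvelopingAlgebra k L ⊗[k]
      (UniversalEnvelopingAlgebra k L ⊗[k] UniversalEnvelopingAlgebra k L) :=
  comm (ins12 k L r) (ins13 k L s) + comm (ins12 k L r) (ins23 k L s)
    + comm (ins13 k L r) (ins23 k L s) + comm (ins12 k L s) (ins13 k L r)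
    + comm (ins12 k L s) (ins23 k L r) + comm (ins13 k L s) (ins23 k L r)

lemma CYB_add (r s : L ⊗[k] L) : CYB k L (r + s) = CYB k L r + CYB k L s + cybCross r s := by
  simp only [CYB, cybCross, map_add, comm_eq_lie, add_lie, lie_add]
  abel

lemma cybCross_eq_zero [CharZero k] {t f : L ⊗[k] L} (ht : ∀ x : L, ⁅x, t⁆ = 0)
    (hf : TensorProduct.comm k L L f = -f) : cybCross t f = 0 := by
  have h12 := LinearMap.congr_fun (ad_ins12_comp_ins13_add_ins23 ht) f
  have h23 := LinearMap.congr_fun (ad_ins23_comp_ins12_add_ins13 ht) f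
  have h13 := apply_eq_zero_of_comp_comm_eq_self (ad_ins13_comp_ins23_sub_ins12_comp_comm ht) hf
  simp only [LinearMap.comp_apply, LinearMap.add_apply, LinearMap.sub_apply, ad_apply,
    LinearMap.zero_apply, lie_add, lie_sub] at h12 h23 h13
  simp only [cybCross, comm_eq_lie]
  rw [← lie_skew (ins12 k L f), ← lie_skew (ins12 k L f), ← lie_skew (ins13 k L f)]
  linear_combination (norm := abel) h12 + h13 - h23

end QuasiLieBialgebraTwist

namespace QuasiLieBialgebraTwist

variable (k : Type*) [Field k] [CharZero k]
variable (L : Type*) [LieRing L] [LieAlgebra k L]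

/-- If `t ∈ L ⊗ L` is invariant under the diagonal adjoint action and
`f ∈ L ⊗ L` is antisymmetric, then inside `U ⊗ U ⊗ U` the sum of the mixed commutators
`[t¹², f¹³] + [t¹², f²³] + [t¹³, f²³] + [f¹², t¹³] + [f¹², t²³] + [f¹³, t²³]` vanishes;
consequently `CYB(t + f) = CYB(t) + CYB(f)`. -/
theorem mixed_cyb_terms_vanish (t f : L ⊗[k] L)
    (ht : ∀ x : L,
      (TensorProduct.map (LieAlgebra.ad k L x : L →ₗ[k] L) (LinearMap.id : L →ₗ[k] L)
        + TensorProduct.map (LinearMap.id : L →ₗ[k] L) (LieAlgebra.ad k L x : L →ₗ[k] L)) t = 0)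
    (hf : TensorProduct.comm k L L f = -f) :
    comm (ins12 k L t) (ins13 k L f) + comm (ins12 k L t) (ins23 k L f)
        + comm (ins13 k L t) (ins23 k L f) + comm (ins12 k L f) (ins13 k L t)
        + comm (ins12 k L f) (ins23 k L t) + comm (ins13 k L f) (ins23 k L t) = 0 ∧
      CYB k L (t + f) = CYB k L t + CYB k L f := by
  have hcross : cybCross t f = 0 :=
    cybCross_eq_zero (fun x ↦ map_ad_id_add_map_id_ad_apply x t ▸ ht x) hf
  exact ⟨hcross, by rw [CYB_add, hcross, add_zero]⟩

end QuasiLieBialgebraTwist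
end

section
/- Let k be a field, R = k[[ℏ]] the formal power series ring, and for an R-module P let P^ = lim_n P/ℏⁿP denote its ℏ-adic completion. For any R-modules M and N, the map (M ⊗_R N)^ → (M^ ⊗_R N^)^ on ℏ-adic completions induced by the canonical maps M → M^ and N → N^ is an isomorphism of R-modules. -/
open scoped TensorProduct

/-!
For a finitely generated ideal `I`, the canonical map `M → M^` becomes an isomorphism modulo
every `Iⁿ`, because the kernel of `M^ → M/IⁿM` is exactly `IⁿM^`. Since
`(P ⊗ Q)/J(P ⊗ Q) ≅ P/JP ⊗ Q/JQ`, the same holds for `M ⊗ N → M^ ⊗ N^`, and a map that is an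
isomorphism modulo every `Iⁿ` induces an isomorphism of `I`-adic completions.
-/

section

variable {R : Type*} [CommRing R]
variable {M : Type*} [AddCommGroup M] [Module R M]
variable {N : Type*} [AddCommGroup N] [Module R N]
variable {M' : Type*} [AddCommGroup M'] [Module R M']
variable {N' : Type*} [AddCommGroup N'] [Module R N']

namespace TensorProduct

open Submodule

theorem range_map_smul_top_subtype_id (J : Ideal R) :
    LinearMap.range (map (J • ⊤ : Submodule R M).subtype (LinearMap.id (M := N))) =
      J • ⊤ := by
  apply le_antisymm
  · rw [range_map, range_subtype, LinearMap.range_id]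
    exact map₂_le.mpr fun m hm n _ => smul_top_le_comap_smul_top J ((mk R M N).flip n) hm
  · refine smul_le.mpr fun r hr t _ => ⟨map ((r • LinearMap.id).codRestrict _
      fun m => smul_mem_smul hr mem_top) LinearMap.id t, ?_⟩
    rw [← LinearMap.comp_apply, ← map_comp]
    simp [map_smul_left]

theorem range_map_id_smul_top_subtype (J : Ideal R) :
    LinearMap.range (map (LinearMap.id (M := M)) (J • ⊤ : Submodule R N).subtype) =
      J • ⊤ := by
  apply le_antisymm
  · rw [range_map, range_subtype, LinearMap.range_id]
    exact map₂_le.mpr fun m _ n hn => smul_top_le_comap_smul_top J (mk R M N m) hn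
  · refine smul_le.mpr fun r hr t _ => ⟨map LinearMap.id ((r • LinearMap.id).codRestrict _
      fun m => smul_mem_smul hr mem_top) t, ?_⟩
    rw [← LinearMap.comp_apply, ← map_comp]
    simp [map_smul_right]

noncomputable def quotSMulTopTensorEquivQuotSMulTop (J : Ideal R) :
    (M ⧸ (J • ⊤ : Submodule R M)) ⊗[R] (N ⧸ (J • ⊤ : Submodule R N)) ≃ₗ[R]
      (M ⊗[R] N) ⧸ (J • ⊤ : Submodule R (M ⊗[R] N)) :=
  (quotientTensorQuotientEquiv _ _).trans <| quotEquivOfEq _ _ <| by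
    rw [range_map_smul_top_subtype_id, range_map_id_smul_top_subtype, sup_idem]

theorem reduceModIdeal_map_bijective (J : Ideal R) {f : M →ₗ[R] M'} {g : N →ₗ[R] N'}
    (hf : Function.Bijective (f.reduceModIdeal J)) (hg : Function.Bijective (g.reduceModIdeal J)) :
    Function.Bijective ((map f g).reduceModIdeal J) := by
  have hcomm : ((map f g).reduceModIdeal J).restrictScalars R ∘ₗ
      (quotSMulTopTensorEquivQuotSMulTop J).toLinearMap =
      (quotSMulTopTensorEquivQuotSMulTop J).toLinearMap ∘ₗ
        map ((f.reduceModIdeal J).restrictScalars R) ((g.reduceModIdeal J).restrictScalars R) := by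
    ext m n
    rfl
  have h : ⇑((map f g).reduceModIdeal J) = quotSMulTopTensorEquivQuotSMulTop J ∘
      map ((f.reduceModIdeal J).restrictScalars R) ((g.reduceModIdeal J).restrictScalars R) ∘
        (quotSMulTopTensorEquivQuotSMulTop J).symm := by
    funext x
    simpa using congr($hcomm ((quotSMulTopTensorEquivQuotSMulTop J).symm x))
  rw [h]
  exact (LinearEquiv.bijective _).comp <|
    (map_bijective (R := R) hf hg).comp (LinearEquiv.bijective _)

end TensorProduct

namespace AdicCompletion

variable {I : Ideal R}

theorem reduceModIdeal_of_bijective (hI : I.FG) (n : ℕ) :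
    Function.Bijective ((of I M).reduceModIdeal (I ^ n)) := by
  let e := (Submodule.quotEquivOfEq _ _ (pow_smul_top_eq_ker_eval (M := M) (n := n) hI)).trans
    ((eval I M n).quotKerEquivOfSurjective (eval_surjective I M n))
  have h : ⇑((of I M).reduceModIdeal (I ^ n)) = e.symm := by
    funext x
    apply e.injective
    induction x using Submodule.Quotient.induction_on
    simp [e]
  rw [h]
  exact e.symm.bijective

theorem map_bijective_of_forall_reduceModIdeal_bijective {f : M →ₗ[R] M'}
    (h : ∀ n, Function.Bijective (f.reduceModIdeal (I ^ n))) : Function.Bijective (map I f) := by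
  refine ⟨fun x y hxy => ext fun n => (h n).injective ?_, fun y => ?_⟩
  · simpa only [map_val_apply] using congr(($hxy).val n)
  let e n := Equiv.ofBijective _ (h n)
  refine ⟨⟨fun n => (e n).symm (y.val n), fun {m n} hmn => (h m).injective ?_⟩,
    ext fun n => (e n).apply_symm_apply _⟩
  calc f.reduceModIdeal (I ^ m) (transitionMap I M hmn ((e n).symm (y.val n)))
      = transitionMap I M' hmn (e n ((e n).symm (y.val n))) :=
        congr($(transitionMap_comp_reduceModIdeal I f hmn) _).symm
    _ = e m ((e m).symm (y.val m)) := by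
        simpa only [Equiv.apply_symm_apply] using y.property hmn

variable (M N) in
theorem map_tensorMap_of_bijective (hI : I.FG) :
    Function.Bijective (map I (TensorProduct.map (of I M) (of I N))) :=
  map_bijective_of_forall_reduceModIdeal_bijective fun n =>
    TensorProduct.reduceModIdeal_map_bijective _ (reduceModIdeal_of_bijective hI n)
      (reduceModIdeal_of_bijective hI n)

end AdicCompletion

end

/-- Over `R = k[[ℏ]]`, for any `R`-modules `M` and `N`, the map
`(M ⊗_R N)^ → (M^ ⊗_R N^)^` between `ℏ`-adic completions induced by the canonical maps
`M → M^` and `N → N^` is an isomorphism of `R`-modules (it is `R`-linear and bijective). -/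
theorem completion_of_tensor_iso_completion_of_completed_tensor
    (k : Type*) [Field k]
    (M N : Type*) [AddCommGroup M] [Module (PowerSeries k) M]
    [AddCommGroup N] [Module (PowerSeries k) N] :
    Function.Bijective
      ⇑(AdicCompletion.map (Ideal.span {(PowerSeries.X : PowerSeries k)})
        (TensorProduct.map
          (AdicCompletion.of (Ideal.span {(PowerSeries.X : PowerSeries k)}) M)
          (AdicCompletion.of (Ideal.span {(PowerSeries.X : PowerSeries k)}) N))) :=
  AdicCompletion.map_tensorMap_of_bijective M N (Submodule.fg_span_singleton _)
end
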